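/- For a Cauchy sequence s = (x_n) in a V-category (X,a) and any x ∈ X, one has ⋁_{N} ⋀_{n ≥ N} a(x_n, x) = ⋀_{N} ⋁_{n ≥ N} a(x_n, x). -/

import Mathlib

/-!
The inequality liminf ≤ limsup holds in every complete lattice. Conversely, let `U` be the
limsup and `c_N = ⋀_{n,m ≥ N} a(x_n, x_m)`. Then `U = U ⊗ k ≤ U ⊗ ⋁_N c_N = ⋁_N U ⊗ c_N`, and
since `U ≤ ⋁_{n ≥ N} a(x_n, x)`, the triangle inequality `a(x_m, x_n) ⊗ a(x_n, x) ≤ a(x_m, x)`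
bounds `U ⊗ c_N` by `⋀_{m ≥ N} a(x_m, x)`.
-/


/-- A (commutative, unital) quantale structure on a complete lattice `V`:
an associative commutative multiplication `⊗` with unit `k` such that
`u ⊗ -` preserves arbitrary suprema. -/
structure QuantaleStr (V : Type*) [CompleteLattice V] where
  mul : V → V → V
  k : V
  mul_comm : ∀ a b, mul a b = mul b a
  mul_assoc : ∀ a b c, mul (mul a b) c = mul a (mul b c)
  mul_unit : ∀ a, mul a k = a
  mul_sSup : ∀ (a : V) (S : Set V), mul a (sSup S) = ⨆ b ∈ S, mul a b

variable {V : Type*} [CompleteLattice V]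

/-- `a : X → X → V` is a `V`-category structure: `k ≤ a x x` and
`a x y ⊗ a y z ≤ a x z`. -/
def IsVCat (Q : QuantaleStr V) {X : Type*} (a : X → X → V) : Prop :=
  (∀ x, Q.k ≤ a x x) ∧ ∀ x y z, Q.mul (a x y) (a y z) ≤ a x z


/-- The "Cauchyness" of a sequence `s` in a `V`-category `(X,a)`:
`C s = ⨆ N, ⨅_{n,m ≥ N} a (s n) (s m)`. -/
def cauchyDeg (Q : QuantaleStr V) {X : Type*} (a : X → X → V) (s : ℕ → X) : V :=
  ⨆ N : ℕ, ⨅ n : ℕ, ⨅ m : ℕ, ⨅ _ : N ≤ n, ⨅ _ : N ≤ m, a (s n) (s m)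

/-- `s` is a Cauchy sequence if `k ≤ C s`. -/
def IsCauchySeq (Q : QuantaleStr V) {X : Type*} (a : X → X → V) (s : ℕ → X) : Prop :=
  Q.k ≤ cauchyDeg Q a s

namespace QuantaleStr

variable (Q : QuantaleStr V)

lemma mul_iSup (a : V) {ι : Sort*} (f : ι → V) :
    Q.mul a (⨆ i, f i) = ⨆ i, Q.mul a (f i) := by
  rw [iSup, Q.mul_sSup, iSup_range]

lemma mul_le_mul_left {x y : V} (a : V) (h : x ≤ y) : Q.mul a x ≤ Q.mul a y := by
  have hsup : Q.mul a (x ⊔ y) = Q.mul a x ⊔ Q.mul a y := by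
    rw [← sSup_pair, Q.mul_sSup, iSup_pair]
  rw [← sup_eq_right.2 h, hsup]
  exact le_sup_left

lemma mul_le_mul {a b x y : V} (hab : a ≤ b) (hxy : x ≤ y) : Q.mul a x ≤ Q.mul b y :=
  calc Q.mul a x ≤ Q.mul a y := Q.mul_le_mul_left a hxy
    _ = Q.mul y a := Q.mul_comm a y
    _ ≤ Q.mul y b := Q.mul_le_mul_left y hab
    _ = Q.mul b y := Q.mul_comm y b

end QuantaleStr

lemma IsVCat.mul_iSup_tail_le_iInf_tail {Q : QuantaleStr V} {X : Type*} {a : X → X → V}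
    (ha : IsVCat Q a) (s : ℕ → X) (x : X) {N : ℕ} {c : V}
    (hc : ∀ m n, N ≤ m → N ≤ n → c ≤ a (s m) (s n)) :
    Q.mul c (⨆ n, ⨆ _ : N ≤ n, a (s n) x) ≤ ⨅ m, ⨅ _ : N ≤ m, a (s m) x := by
  simp only [Q.mul_iSup, iSup_le_iff, le_iInf_iff]
  intro m hm n hn
  exact (Q.mul_le_mul (hc m n hm hn) le_rfl).trans (ha.2 _ _ _)

/-- For a Cauchy sequence `s` and any `x`:
`⨆ N, ⨅_{n ≥ N} a (s n) x = ⨅ N, ⨆_{n ≥ N} a (s n) x`. -/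
theorem cauchy_liminf_eq_limsup (Q : QuantaleStr V) {X : Type*}
    (a : X → X → V) (ha : IsVCat Q a) (s : ℕ → X)
    (hs : IsCauchySeq Q a s) (x : X) :
    (⨆ N : ℕ, ⨅ n : ℕ, ⨅ _ : N ≤ n, a (s n) x) =
      ⨅ N : ℕ, ⨆ n : ℕ, ⨆ _ : N ≤ n, a (s n) x := by
  refine le_antisymm ?_ ?_
  · simpa only [Filter.liminf_eq_iSup_iInf_of_nat, Filter.limsup_eq_iInf_iSup_of_nat] using
      Filter.liminf_le_limsup (u := fun n => a (s n) x) (f := Filter.atTop)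
  · set U := ⨅ N : ℕ, ⨆ n : ℕ, ⨆ _ : N ≤ n, a (s n) x
    calc U = Q.mul U Q.k := (Q.mul_unit U).symm
      _ ≤ Q.mul U (cauchyDeg Q a s) := Q.mul_le_mul_left U hs
      _ = ⨆ N : ℕ, Q.mul U (⨅ n, ⨅ m, ⨅ _ : N ≤ n, ⨅ _ : N ≤ m, a (s n) (s m)) :=
        Q.mul_iSup U _
      _ ≤ _ := iSup_mono fun N => by
        rw [Q.mul_comm]
        refine (Q.mul_le_mul le_rfl (iInf_le _ N)).trans ?_
        refine ha.mul_iSup_tail_le_iInf_tail s x fun m n hm hn => ?_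
        exact iInf_le_of_le m <| iInf_le_of_le n <| iInf_le_of_le hm <| iInf_le _ hn
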